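/- With F_{n,k}(z,q) = (1 − z² q^{2k+1}) [n choose k]_q (zq;q)_n z^k q^{k²} / (z² q^{k+1};q)_{n+1}, for all n ≥ 1 and all k: F_{n,k}(z,q) = (1 − zq^n)/(1 − z²q^{n+1}) · F_{n−1,k}(z,q) + (1 − zq) z q^n/(1 − z²q^{n+1}) · F_{n−1,k−1}(zq, q), with F_{n,k} = 0 if k < 0 or k > n. -/

import Mathlib

/-- The q-shifted factorial `(x;q)_n`. -/
def qPoch {K : Type*} [Field K] (q x : K) (n : ℕ) : K :=
  ∏ j ∈ Finset.range n, (1 - x * q ^ j)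

/-- The Gaussian binomial coefficient `[N choose k]_q` with integer arguments,
zero outside the range `0 ≤ k ≤ N`. -/
def qBinomZ {K : Type*} [Field K] (q : K) (N k : ℤ) : K :=
  if 0 ≤ k ∧ k ≤ N then
    qPoch q q N.toNat / (qPoch q q k.toNat * qPoch q q (N - k).toNat)
  else 0

/-- The summand `F_{n,k}(z,q) = (1 − z²q^{2k+1}) [n,k]_q (zq;q)_n z^k q^{k²} / (z²q^{k+1};q)_{n+1}`;
it vanishes for `k < 0` or `k > n` via the convention on `qBinomZ`. -/
def quintupleTerm {K : Type*} [Field K] (q z : K) (n : ℕ) (k : ℤ) : K :=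
  (1 - z ^ 2 * q ^ (2 * k + 1)) * qBinomZ q n k *
    (qPoch q (z * q) n / qPoch q (z ^ 2 * q ^ (k + 1)) (n + 1)) * z ^ k * q ^ (k ^ 2)

/-!
Write `F_{n,k}(z) = [n,k]_q · W_{n,k}(z)`. The three weights in the recurrence are all
multiples of `W_{n,k}(z)` by elementary factors, and after dividing by `W_{n,k}(z)` the claim
becomes `[n,k](1 - x q^{n+1}) = [n-1,k](1 - x q^{n+k+1}) + q^{n-k}[n-1,k-1](1 - x q^{k+1})`
with `x = z²`. Its coefficients of `1` and of `x` are the two q-Pascal rules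
`[n,k] = [n-1,k] + q^{n-k}[n-1,k-1]` and `[n,k] = q^k[n-1,k] + [n-1,k-1]`,
the second being the first read through the symmetry `[n,k] = [n,n-k]`.
-/

section

variable {K : Type*} [Field K]

lemma qPoch_zero (q x : K) : qPoch q x 0 = 1 := Finset.prod_range_zero _

lemma qPoch_succ (q x : K) (n : ℕ) : qPoch q x (n + 1) = qPoch q x n * (1 - x * q ^ n) :=
  Finset.prod_range_succ _ _

lemma qPoch_succ' (q x : K) (n : ℕ) : qPoch q x (n + 1) = (1 - x) * qPoch q (x * q) n := by
  rw [qPoch, Finset.prod_range_succ', pow_zero, mul_one, mul_comm, qPoch]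
  exact congrArg _ (Finset.prod_congr rfl fun j _ => by ring)

lemma qPoch_ne_zero_of_le {q x : K} {m n : ℕ} (hmn : m ≤ n) (h : qPoch q x n ≠ 0) :
    qPoch q x m ≠ 0 := by
  rw [qPoch, Finset.prod_ne_zero_iff] at h ⊢
  exact fun j hj => h j (Finset.range_subset_range.mpr hmn hj)

lemma one_sub_mul_pow_ne_zero {q x : K} {j n : ℕ} (hj : j < n) (h : qPoch q x n ≠ 0) :
    1 - x * q ^ j ≠ 0 := by
  have := qPoch_ne_zero_of_le hj h
  rw [qPoch_succ] at this
  exact right_ne_zero_of_mul this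

lemma qPoch_mul_zpow_ne_zero {q x : K} (hq : q ≠ 0) (hx : ∀ j : ℤ, 1 - x * q ^ j ≠ 0)
    (k : ℤ) (n : ℕ) : qPoch q (x * q ^ k) n ≠ 0 := by
  rw [qPoch, Finset.prod_ne_zero_iff]
  intro j _
  simpa [mul_assoc, zpow_add₀ hq] using hx (k + j)

lemma qBinomZ_of_lt_zero (q : K) {N k : ℤ} (hk : k < 0) : qBinomZ q N k = 0 :=
  if_neg (by omega)

lemma qBinomZ_of_lt (q : K) {N k : ℤ} (hk : N < k) : qBinomZ q N k = 0 :=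
  if_neg (by omega)

lemma qBinomZ_natCast (q : K) {n j : ℕ} (h : j ≤ n) :
    qBinomZ q n j = qPoch q q n / (qPoch q q j * qPoch q q (n - j)) := by
  rw [qBinomZ, if_pos ⟨j.cast_nonneg, Int.ofNat_le.mpr h⟩, ← Nat.cast_sub h]
  simp only [Int.toNat_natCast]

lemma qBinomZ_symm (q : K) (N k : ℤ) : qBinomZ q N (N - k) = qBinomZ q N k := by
  unfold qBinomZ
  by_cases hk : 0 ≤ k ∧ k ≤ N
  · rw [if_pos hk, if_pos (by omega), sub_sub_cancel, mul_comm]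
  · rw [if_neg hk, if_neg (by omega)]

lemma qBinomZ_zero_right {q : K} {n : ℕ} (h : qPoch q q n ≠ 0) : qBinomZ q n 0 = 1 := by
  rw [← Nat.cast_zero, qBinomZ_natCast q n.zero_le, qPoch_zero, one_mul, Nat.sub_zero,
    div_self h]

lemma qBinomZ_self {q : K} {n : ℕ} (h : qPoch q q n ≠ 0) : qBinomZ q n n = 1 := by
  rw [← qBinomZ_symm, sub_self, qBinomZ_zero_right h]

lemma qBinomZ_pascal {q : K} {m : ℕ} (hP : qPoch q q (m + 1) ≠ 0) (k : ℤ) :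
    qBinomZ q (m + 1 : ℕ) k = qBinomZ q m k + q ^ ((m : ℤ) + 1 - k) * qBinomZ q m (k - 1) := by
  have hPm : qPoch q q m ≠ 0 := qPoch_ne_zero_of_le m.le_succ hP
  rcases lt_trichotomy k 0 with hk | rfl | hk
  · rw [qBinomZ_of_lt_zero q hk, qBinomZ_of_lt_zero q hk,
      qBinomZ_of_lt_zero q (by omega : k - 1 < 0)]
    ring
  · rw [qBinomZ_zero_right hP, qBinomZ_zero_right hPm,
      qBinomZ_of_lt_zero q (by norm_num : (0 : ℤ) - 1 < 0)]
    ring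
  rcases lt_trichotomy k ((m + 1 : ℕ) : ℤ) with hkm | rfl | hkm
  · obtain ⟨i, a, rfl, rfl⟩ : ∃ i a : ℕ, k = i + 1 ∧ m = i + 1 + a :=
      ⟨k.toNat - 1, m - k.toNat, by omega, by omega⟩
    have hPi : qPoch q q i ≠ 0 := qPoch_ne_zero_of_le (by omega) hP
    have hPa : qPoch q q a ≠ 0 := qPoch_ne_zero_of_le (by omega) hP
    have hqi : 1 - q * q ^ i ≠ 0 := one_sub_mul_pow_ne_zero (by omega) hP
    have hqa : 1 - q * q ^ a ≠ 0 := one_sub_mul_pow_ne_zero (by omega) hP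
    rw [show (i : ℤ) + 1 - 1 = (i : ℕ) by ring,
      show (i : ℤ) + 1 = (i + 1 : ℕ) by push_cast; ring,
      show ((i + 1 + a : ℕ) : ℤ) + 1 - (i + 1 : ℕ) = (a + 1 : ℕ) by push_cast; ring,
      zpow_natCast,
      qBinomZ_natCast q (by omega), qBinomZ_natCast q (by omega), qBinomZ_natCast q (by omega),
      show i + 1 + a + 1 - (i + 1) = a + 1 by omega, show i + 1 + a - (i + 1) = a by omega,
      show i + 1 + a - i = a + 1 by omega, qPoch_succ q q (i + 1 + a), qPoch_succ q q i,
      qPoch_succ q q a]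
    field_simp
    ring
  · rw [qBinomZ_self hP, qBinomZ_of_lt q (by omega : (m : ℤ) < ((m + 1 : ℕ) : ℤ)),
      show ((m + 1 : ℕ) : ℤ) - 1 = m by push_cast; ring, qBinomZ_self hPm,
      show (m : ℤ) + 1 - ((m + 1 : ℕ) : ℤ) = 0 by push_cast; ring, zpow_zero]
    ring
  · rw [qBinomZ_of_lt q hkm, qBinomZ_of_lt q (by omega : (m : ℤ) < k),
      qBinomZ_of_lt q (by omega : (m : ℤ) < k - 1)]
    ring

lemma qBinomZ_pascal' {q : K} {m : ℕ} (hP : qPoch q q (m + 1) ≠ 0) (k : ℤ) :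
    qBinomZ q (m + 1 : ℕ) k = q ^ k * qBinomZ q m k + qBinomZ q m (k - 1) := by
  have h := qBinomZ_pascal hP ((m + 1 : ℕ) - k)
  rw [qBinomZ_symm, show ((m + 1 : ℕ) : ℤ) - k = m - (k - 1) by push_cast; ring, qBinomZ_symm,
    show (m : ℤ) - (k - 1) - 1 = m - k by ring, qBinomZ_symm,
    show (m : ℤ) + 1 - (m - (k - 1)) = k by ring] at h
  linear_combination h

lemma qBinomZ_mul_one_sub {q : K} (hq : q ≠ 0) {m : ℕ} (hP : qPoch q q (m + 1) ≠ 0)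
    (k : ℤ) (x : K) :
    qBinomZ q (m + 1 : ℕ) k * (1 - x * q ^ ((m : ℤ) + 2)) =
      qBinomZ q m k * (1 - x * q ^ (k + m + 2)) +
        q ^ ((m : ℤ) + 1 - k) * qBinomZ q m (k - 1) * (1 - x * q ^ (k + 1)) := by
  have e₁ : q ^ ((m : ℤ) + 2) * q ^ k = q ^ (k + m + 2) := by
    rw [← zpow_add₀ hq]; ring_nf
  have e₂ : q ^ ((m : ℤ) + 1 - k) * q ^ (k + 1) = q ^ ((m : ℤ) + 2) := by
    rw [← zpow_add₀ hq]; ring_nf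
  linear_combination qBinomZ_pascal hP k - x * q ^ ((m : ℤ) + 2) * qBinomZ_pascal' hP k
    - x * qBinomZ q m k * e₁ + x * qBinomZ q m (k - 1) * e₂

def quintupleWeight (q z : K) (n : ℕ) (k : ℤ) : K :=
  (1 - z ^ 2 * q ^ (2 * k + 1)) * (qPoch q (z * q) n / qPoch q (z ^ 2 * q ^ (k + 1)) (n + 1)) *
    z ^ k * q ^ (k ^ 2)

lemma quintupleTerm_eq_qBinomZ_mul (q z : K) (n : ℕ) (k : ℤ) :
    quintupleTerm q z n k = qBinomZ q n k * quintupleWeight q z n k := by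
  unfold quintupleTerm quintupleWeight
  ring

variable {q z : K}

lemma quintupleWeight_succ (hq : q ≠ 0) (hzz : ∀ j : ℤ, 1 - z ^ 2 * q ^ j ≠ 0)
    (n : ℕ) (k : ℤ) :
    (1 - z * q ^ ((n : ℤ) + 1)) * quintupleWeight q z n k =
      (1 - z ^ 2 * q ^ (k + n + 2)) * quintupleWeight q z (n + 1) k := by
  have hD := qPoch_mul_zpow_ne_zero hq hzz (k + 1) (n + 1)
  have e : z ^ 2 * q ^ (k + 1) * q ^ (n + 1) = z ^ 2 * q ^ (k + n + 2) := by
    rw [mul_assoc, ← zpow_natCast q, ← zpow_add₀ hq]; push_cast; ring_nf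
  unfold quintupleWeight
  rw [qPoch_succ q (z * q) n, qPoch_succ _ _ (n + 1), e, zpow_add_one₀ hq, zpow_natCast]
  field_simp [hzz]

lemma quintupleWeight_shift (hq : q ≠ 0) (hz : z ≠ 0)
    (hzz : ∀ j : ℤ, 1 - z ^ 2 * q ^ j ≠ 0) (n : ℕ) (k : ℤ) :
    (1 - z * q) * z * q ^ ((n : ℤ) + 1) * quintupleWeight q (z * q) n (k - 1) =
      q ^ ((n : ℤ) + 1 - k) * (1 - z ^ 2 * q ^ (k + 1)) * quintupleWeight q z (n + 1) k := by
  have e₁ : (z * q) ^ 2 * q ^ (k - 1 + 1) = z ^ 2 * q ^ (k + 1) * q := by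
    rw [sub_add_cancel, zpow_add_one₀ hq]; ring
  have e₂ : (z * q) ^ 2 * q ^ (2 * (k - 1) + 1) = z ^ 2 * q ^ (2 * k + 1) := by
    rw [show 2 * (k - 1) + 1 = 2 * k + 1 - 2 by ring, zpow_sub₀ hq]; field_simp
  have hD : qPoch q (z ^ 2 * q ^ (k + 1) * q) (n + 1) ≠ 0 := by
    rw [mul_assoc, ← zpow_add_one₀ hq]; exact qPoch_mul_zpow_ne_zero hq hzz _ _
  have e₃ : q ^ ((k - 1) ^ 2) = q ^ (k ^ 2) * q / (q ^ k) ^ 2 := by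
    rw [show (k - 1) ^ 2 = k ^ 2 - k * 2 + 1 by ring, zpow_add_one₀ hq, zpow_sub₀ hq, zpow_mul,
      zpow_ofNat, div_mul_eq_mul_div]
  have e₄ : q ^ ((n : ℤ) + 1 - k) = q ^ n * q / q ^ k := by
    rw [zpow_sub₀ hq, zpow_add_one₀ hq, zpow_natCast]
  unfold quintupleWeight
  rw [e₁, e₂, e₃, e₄, qPoch_succ' q (z * q) n, qPoch_succ' _ _ (n + 1), mul_zpow,
    zpow_sub_one₀ hz, zpow_sub_one₀ hq, zpow_add_one₀ hq, zpow_natCast]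
  field_simp [hzz]

end

/-- The recurrence for the summand of the finite quintuple product identity:
`F_{n,k}(z,q) = (1−zq^n)/(1−z²q^{n+1}) F_{n−1,k}(z,q)
  + (1−zq) z q^n/(1−z²q^{n+1}) F_{n−1,k−1}(zq,q)`. -/
theorem quintuple_term_rec {K : Type*} [Field K] (q z : K) (n : ℕ) (k : ℤ)
    (hn : 1 ≤ n) (hq : q ≠ 0) (hz : z ≠ 0) (hqq : qPoch q q n ≠ 0)
    (hzz : ∀ j : ℤ, 1 - z ^ 2 * q ^ j ≠ 0) :
    quintupleTerm q z n k
    = (1 - z * q ^ (n : ℤ)) / (1 - z ^ 2 * q ^ ((n : ℤ) + 1)) * quintupleTerm q z (n - 1) k +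
      (1 - z * q) * z * q ^ (n : ℤ) / (1 - z ^ 2 * q ^ ((n : ℤ) + 1)) *
        quintupleTerm q (z * q) (n - 1) (k - 1) := by
  obtain ⟨m, rfl⟩ : ∃ m, n = m + 1 := ⟨n - 1, by omega⟩
  rw [Nat.add_sub_cancel, div_mul_eq_mul_div, div_mul_eq_mul_div, ← add_div,
    eq_div_iff (hzz _), quintupleTerm_eq_qBinomZ_mul, quintupleTerm_eq_qBinomZ_mul,
    quintupleTerm_eq_qBinomZ_mul]
  linear_combination (norm := skip)
    quintupleWeight q z (m + 1) k * qBinomZ_mul_one_sub hq hqq k (z ^ 2)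
    - qBinomZ q m k * quintupleWeight_succ hq hzz m k
    - qBinomZ q m (k - 1) * quintupleWeight_shift hq hz hzz m k
  push_cast
  ring_nf
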